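/- For every m ≥ 2 and every integer r with m < r < 2m, there is no independent exact r-cover of the grid graph ℤ^m: there is no set S ⊆ ℤ^m that is independent and such that every vertex not in S has exactly r neighbours in S. -/

import Mathlib

/-- Adjacency in the grid graph `ℤ^m`: two vertices are adjacent iff they differ by `±1`
in exactly one coordinate. -/
def gridAdj (m : ℕ) (x y : Fin m → ℤ) : Prop :=
  ∃ j, (y j = x j + 1 ∨ y j = x j - 1) ∧ ∀ i, i ≠ j → y i = x i

/-- `S ⊆ ℤ^m` is an independent exact `r`-cover if `S` is an independent set in the grid
graph `ℤ^m` and every vertex not in `S` is adjacent to exactly `r` elements of `S`. -/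
def IsIndepExactCover (m r : ℕ) (S : Set (Fin m → ℤ)) : Prop :=
  (∀ x ∈ S, ∀ y ∈ S, ¬ gridAdj m x y) ∧
    ∀ x ∉ S, {y | y ∈ S ∧ gridAdj m x y}.ncard = r

/-!
A neighbour of `x` is `x + gridStep p` for a unique step `p ∈ Fin m × ℤˣ`, and there are `2m`
steps. If `x` and a neighbour `w` both lie outside an independent exact `r`-cover `S`, then no
step `p` can lead from both into `S`: `x + gridStep p` and `w + gridStep p` would be adjacent
members of `S`. Hence `r + r ≤ 2m`. Such `x` and `w` exist when `r < 2m`, since `x` has only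
`r` of its `2m` neighbours in `S`.
-/

variable {m : ℕ}

def gridStep (p : Fin m × ℤˣ) : Fin m → ℤ := Pi.single p.1 (p.2 : ℤ)

theorem gridStep_injective : Function.Injective (gridStep (m := m)) := by
  rintro ⟨i, u⟩ ⟨j, v⟩ h
  have hi := congrFun h i
  obtain rfl : i = j := by
    by_contra hij
    simp [gridStep, hij] at hi
  simpa [gridStep, Units.val_inj] using hi

theorem nat_card_fin_prod_units_int : Nat.card (Fin m × ℤˣ) = 2 * m := by
  simp [mul_comm]

theorem gridAdj_iff {x y : Fin m → ℤ} : gridAdj m x y ↔ ∃ p, y = x + gridStep p := by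
  constructor
  · rintro ⟨j, hj, hother⟩
    have step (u : ℤˣ) (hu : y j = x j + u) : ∃ p, y = x + gridStep p := by
      refine ⟨(j, u), funext fun i => ?_⟩
      by_cases hij : i = j
      · subst hij; simp [gridStep, hu]
      · simp [gridStep, hij, hother i hij]
    rcases hj with hj | hj
    · exact step 1 (by simpa using hj)
    · exact step (-1) (by simp [hj]; ring)
  · rintro ⟨⟨j, u⟩, rfl⟩
    refine ⟨j, ?_, fun i hij => by simp [gridStep, hij]⟩
    rcases Int.units_eq_one_or u with rfl | rfl <;> simp [gridStep, sub_eq_add_neg]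

theorem gridAdj_add_gridStep (x : Fin m → ℤ) (p : Fin m × ℤˣ) : gridAdj m x (x + gridStep p) :=
  gridAdj_iff.2 ⟨p, rfl⟩

def stepsInto (S : Set (Fin m → ℤ)) (x : Fin m → ℤ) : Set (Fin m × ℤˣ) :=
  {p | x + gridStep p ∈ S}

theorem ncard_neighbors_eq_ncard_stepsInto (S : Set (Fin m → ℤ)) (x : Fin m → ℤ) :
    {y | y ∈ S ∧ gridAdj m x y}.ncard = (stepsInto S x).ncard := by
  have hnbrs : {y | y ∈ S ∧ gridAdj m x y} = (x + gridStep ·) '' stepsInto S x := by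
    ext y
    simp only [Set.mem_image, stepsInto, gridAdj_iff]
    constructor
    · rintro ⟨hy, p, rfl⟩
      exact ⟨p, hy, rfl⟩
    · rintro ⟨p, hp, rfl⟩
      exact ⟨hp, p, rfl⟩
  exact hnbrs ▸ Set.ncard_image_of_injective _ ((add_right_injective x).comp gridStep_injective)

theorem disjoint_stepsInto_add_gridStep {S : Set (Fin m → ℤ)}
    (hind : ∀ x ∈ S, ∀ y ∈ S, ¬ gridAdj m x y) (x : Fin m → ℤ) (q : Fin m × ℤˣ) :
    Disjoint (stepsInto S x) (stepsInto S (x + gridStep q)) :=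
  Set.disjoint_left.2 fun _ hp hp' =>
    hind _ hp _ hp' (gridAdj_iff.2 ⟨q, add_right_comm _ _ _⟩)

theorem IsIndepExactCover.le_of_lt_two_mul {r : ℕ} {S : Set (Fin m → ℤ)}
    (hS : IsIndepExactCover m r S) (hr : r < 2 * m) : r ≤ m := by
  obtain ⟨hind, hcover⟩ := hS
  have hsteps (x) (hx : x ∉ S) : (stepsInto S x).ncard = r :=
    ncard_neighbors_eq_ncard_stepsInto S x ▸ hcover x hx
  obtain ⟨x, hx⟩ : ∃ x, x ∉ S := by
    by_contra! hall
    exact hind 0 (hall 0) _ (hall _) (gridAdj_add_gridStep 0 (⟨0, by omega⟩, 1))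
  obtain ⟨q, hq⟩ : ∃ q, x + gridStep q ∉ S := by
    by_contra! hall
    have hfull : stepsInto S x = Set.univ := Set.eq_univ_of_forall hall
    have := hsteps x hx
    rw [hfull, Set.ncard_univ, nat_card_fin_prod_units_int] at this
    omega
  have hle := Set.ncard_le_ncard (Set.subset_univ (stepsInto S x ∪ stepsInto S (x + gridStep q)))
  rw [Set.ncard_union_eq (disjoint_stepsInto_add_gridStep hind x q), hsteps x hx, hsteps _ hq,
    Set.ncard_univ, nat_card_fin_prod_units_int] at hle
  omega

theorem no_cover_between_m_and_two_m_general (m r : ℕ) (h1 : m < r) (h2 : r < 2 * m) :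
    ¬ ∃ S : Set (Fin m → ℤ), IsIndepExactCover m r S := by
  rintro ⟨S, hS⟩
  exact (hS.le_of_lt_two_mul h2).not_gt h1

/-- For every `m ≥ 2` and every `r` with `m < r < 2m`, there is no independent exact
`r`-cover of the grid graph `ℤ^m`. -/
theorem no_cover_between_m_and_two_m (m r : ℕ) (hm : 2 ≤ m) (h1 : m < r) (h2 : r < 2 * m) :
    ¬ ∃ S : Set (Fin m → ℤ), IsIndepExactCover m r S :=
  no_cover_between_m_and_two_m_general m r h1 h2
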